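/- arXiv:1810.01810 — 2 statements merged into one kernel-verified Lean document; each statement's English description precedes it below -/
import Mathlib

section
/- Let α be an ordinal. For a monomial m = ℓ^r ∈ 𝔏_{<α} set ℓ_β† := ∏_{ρ≤β} ℓ_ρ^{-1} (the monomial with exponent −1 at every ρ ≤ β and 0 elsewhere), m† := ∑_{β<α} r_β ℓ_β† ∈ 𝕃_{<α} (this family is summable since the ℓ_β† are strictly decreasing), and m' := m·m†. Then for all m, n ∈ 𝔏_{<α} and t ∈ ℝ: (i) (mn)† = m† + n† and (m^t)† = t·m†; (ii) (mn)' = m'·n + m·n'; (iii) if m ≠ 1 then m' ≠ 0 and m† ≠ 0; (iv) if m ≺ 1 and n ≠ 1, then m' ≺ n†; (v) if m ≺ n and n ≠ 1, then m' ≺ n'; (vi) supp m' ⊆ {ℓ_β† : β < α}·m. -/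
noncomputable section

open Classical

namespace LogHyp

universe u v w

/-- A subset of a totally ordered set is *well-based* if it contains no infinite
strictly increasing sequence. -/
def WellBased {M : Type u} [Preorder M] (S : Set M) : Prop :=
  ¬ ∃ f : ℕ → M, StrictMono f ∧ ∀ n, f n ∈ S

theorem wellBased_isPWO {M : Type u} [LinearOrder M] {S : Set Mᵒᵈ}
    (h : WellBased (OrderDual.toDual ⁻¹' S)) : S.IsPWO := by
  rw [Set.isPWO_iff_isWF, Set.isWF_iff_no_descending_seq]
  intro f hf hmem
  exact h ⟨fun n => OrderDual.ofDual (f n), fun a b hab => hf hab, hmem⟩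

/-- A family in a field of well-based series (series with monomials in `Mᵒᵈ`,
so that supports are well-based as subsets of `M`) is summable if the union of
the supports is well-based and each monomial lies in the support of only
finitely many members. -/
def IsSummable {M : Type u} [LinearOrder M] {R : Type v} [Zero R] {ι : Type w}
    (f : ι → HahnSeries Mᵒᵈ R) : Prop :=
  WellBased (OrderDual.toDual ⁻¹' (⋃ i, (f i).support)) ∧
    ∀ g : Mᵒᵈ, {i | (f i).coeff g ≠ 0}.Finite

/-- The sum of a summable family (junk value `0` if the family is not summable). -/
noncomputable def famSum {M : Type u} [LinearOrder M] {R : Type v} [AddCommMonoid R] {ι : Type w}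
    (f : ι → HahnSeries Mᵒᵈ R) : HahnSeries Mᵒᵈ R :=
  if h : IsSummable f then
    (⟨f, wellBased_isPWO h.1, h.2⟩ : HahnSeries.SummableFamily Mᵒᵈ R ι).hsum
  else 0

/-- Strongly `k`-linear maps between fields of well-based series:
`k`-linear maps sending summable families to summable families, preserving sums. -/
def IsStronglyLinear {k : Type v} [Semiring k] {M : Type u} {N : Type w}
    [LinearOrder M] [LinearOrder N]
    (Φ : HahnSeries Mᵒᵈ k → HahnSeries Nᵒᵈ k) : Prop :=
  (∀ (c : k) (f : HahnSeries Mᵒᵈ k), Φ (c • f) = c • Φ f) ∧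
  (∀ f g, Φ (f + g) = Φ f + Φ g) ∧
  ∀ {ι : Type u} (f : ι → HahnSeries Mᵒᵈ k), IsSummable f →
    IsSummable (fun i => Φ (f i)) ∧ Φ (famSum f) = famSum fun i => Φ (f i)

/-- `f ≺ g`: the dominant monomial of `f` is smaller than that of `g`
(with `𝔡 0` below all monomials). -/
def prec {M : Type u} [LinearOrder M] {R : Type v} [Zero R]
    (f g : HahnSeries Mᵒᵈ R) : Prop :=
  g ≠ 0 ∧ ∀ m ∈ f.support, ∃ n ∈ g.support,
    (OrderDual.ofDual m : M) < OrderDual.ofDual n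

/-- `f ⪯ g`: the dominant monomial of `f` is at most that of `g`. -/
def preceq {M : Type u} [LinearOrder M] {R : Type v} [Zero R]
    (f g : HahnSeries Mᵒᵈ R) : Prop :=
  ∀ m ∈ f.support, ∃ n ∈ g.support, (OrderDual.ofDual m : M) ≤ OrderDual.ofDual n

/-- The coefficient of the dominant (i.e. maximal) monomial of `f` (0 for `f = 0`). -/
noncomputable def leadCoeff {M : Type u} [LinearOrder M] {k : Type v} [Zero k]
    (f : HahnSeries Mᵒᵈ k) : k :=
  if hf : f = 0 then 0
  else f.coeff (f.isWF_support.min (HahnSeries.support_nonempty_iff.mpr hf))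

/-- `f > 0` for real well-based series: the leading coefficient is positive. -/
def SPos {M : Type u} [LinearOrder M] (f : HahnSeries Mᵒᵈ ℝ) : Prop := 0 < leadCoeff f

/-- The ordering of real well-based series: `f < g` iff `g - f` has positive
leading coefficient. -/
def SLt {M : Type u} [LinearOrder M] (f g : HahnSeries Mᵒᵈ ℝ) : Prop := SPos (g - f)

/-- `f > ℝ` : `f` exceeds every real constant. -/
def gtR {M : Type u} [AddCommGroup M] [LinearOrder M] [IsOrderedAddMonoid M] (f : HahnSeries Mᵒᵈ ℝ) : Prop :=
  ∀ r : ℝ, SLt (HahnSeries.C r) f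

/-- `log(1+ε) = ∑_{n≥1} (-1)^{n-1} ε^n / n`, for `ε ≺ 1`. -/
noncomputable def log1p {M : Type u} [AddCommGroup M] [LinearOrder M] [IsOrderedAddMonoid M] {k : Type v} [Field k]
    (ε : HahnSeries Mᵒᵈ k) : HahnSeries Mᵒᵈ k :=
  famSum fun n : ℕ => ((-1 : k) ^ n / ((n : k) + 1)) • ε ^ (n + 1)

/-- `exp(ε) = ∑_{n≥0} ε^n / n!`, for `ε ≺ 1`. -/
noncomputable def expS {M : Type u} [AddCommGroup M] [LinearOrder M] [IsOrderedAddMonoid M] {k : Type v} [Field k]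
    (f : HahnSeries Mᵒᵈ k) : HahnSeries Mᵒᵈ k :=
  famSum fun n : ℕ => ((n.factorial : k))⁻¹ • f ^ n

/-- The operator support of a linear operator: the smallest set `𝔖` of monomials with
`supp S(m) ⊆ 𝔖·m` for all monomials `m`. -/
def opSupport {M : Type u} [AddCommGroup M] [LinearOrder M] [IsOrderedAddMonoid M] {k : Type v} [Zero k] [One k]
    (S : HahnSeries Mᵒᵈ k → HahnSeries Mᵒᵈ k) : Set Mᵒᵈ :=
  ⋃ m : Mᵒᵈ, (fun g => g - m) '' (S (HahnSeries.single m 1)).support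



/-- The ordinals below `α`. -/
abbrev Idx (α : Ordinal.{0}) : Type 1 := {β : Ordinal.{0} // β < α}

/-- The monomial group `𝔏_{<α}`, written additively: a logarithmic hypermonomial
`ℓ^r = ∏_{β<α} ℓ_β^{r_β}` is identified with its exponent sequence `r`, and the
group is ordered lexicographically. -/
abbrev Mon (α : Ordinal.{0}) : Type 1 := Lex (Idx α → ℝ)

/-- The field `𝕃_{<α} = ℝ[[𝔏_{<α}]]` of logarithmic hyperseries: well-based series
with real coefficients and monomials in `𝔏_{<α}` (we use the order dual so that
supports are well-based, i.e. reverse well-ordered, subsets of `𝔏_{<α}`). -/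
abbrev LSeries (α : Ordinal.{0}) : Type 1 := HahnSeries (Mon α)ᵒᵈ ℝ

/-- The monomial `ℓ^r` as an element of the (dualised) monomial group. -/
def monExp (α : Ordinal.{0}) (r : Idx α → ℝ) : (Mon α)ᵒᵈ := OrderDual.toDual (toLex r)

/-- The monomial `ℓ^r` as an element of `𝕃_{<α}`. -/
noncomputable def monS (α : Ordinal.{0}) (r : Idx α → ℝ) : LSeries α :=
  HahnSeries.single (monExp α r) 1

/-- The exponent sequence of the hyperlogarithm `ℓ_β`. -/
def ellExp (α β : Ordinal.{0}) : Idx α → ℝ := fun ρ => if ρ.1 = β then 1 else 0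

/-- The hyperlogarithm `ℓ_β` as an element of `𝕃_{<α}` (for `β < α`). -/
noncomputable def ell (α β : Ordinal.{0}) : LSeries α := monS α (ellExp α β)

/-- The exponent sequence of `ℓ_β' = ∏_{ρ<β} ℓ_ρ⁻¹`. -/
def derExp (α β : Ordinal.{0}) : Idx α → ℝ := fun ρ => if ρ.1 < β then -1 else 0

/-- The exponent sequence of `ℓ_β† = ∏_{ρ≤β} ℓ_ρ⁻¹`. -/
def dagExp (α β : Ordinal.{0}) : Idx α → ℝ := fun ρ => if ρ.1 ≤ β then -1 else 0

/-- `D` is *the* derivation of `𝕃_{<α}`: a strongly `ℝ`-linear derivation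
with `D ℓ_β = ∏_{ρ<β} ℓ_ρ⁻¹` for all `β < α`. -/
def IsDerL (α : Ordinal.{0}) (D : LSeries α → LSeries α) : Prop :=
  IsStronglyLinear D ∧ (∀ f g, D (f * g) = f * D g + g * D f) ∧
    ∀ β : Ordinal.{0}, β < α → D (ell α β) = monS α (derExp α β)

/-- The exponent sequence of the dominant monomial of `f` (0 if `f = 0`). -/
noncomputable def domExp (α : Ordinal.{0}) (f : LSeries α) : Idx α → ℝ :=
  if hf : f = 0 then 0
  else ofLex (OrderDual.ofDual
    (f.isWF_support.min (HahnSeries.support_nonempty_iff.mpr hf)))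

/-- The logarithm on `𝕃_{<α}^{>0}` (`α` a limit ordinal):
`log (c·ℓ^r·(1+ε)) = ∑_β r_β ℓ_{β+1} + log c + ∑_{n≥1} (-1)^{n-1} ε^n/n`. -/
noncomputable def logFn (α : Ordinal.{0}) (f : LSeries α) : LSeries α :=
  (famSum fun β : Idx α => domExp α f β • ell α (β.1 + 1))
    + HahnSeries.C (Real.log (leadCoeff f))
    + log1p (f * (HahnSeries.single (monExp α (domExp α f)) (leadCoeff f))⁻¹ - 1)

/-- The logarithmicity `λ_f`: the least `β` with `r_β ≠ 0`, where `𝔡(f) = ℓ^r`. -/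
noncomputable def lambdaOf (α : Ordinal.{0}) (f : LSeries α) : Ordinal.{0} :=
  sInf {β : Ordinal.{0} | ∃ h : β < α, domExp α f ⟨β, h⟩ ≠ 0}

/-- The coefficient of `ω^δ` in the Cantor normal form of `μ`. -/
noncomputable def cnfCoeff (μ δ : Ordinal.{0}) : ℕ :=
  Cardinal.toNat (Ordinal.card ((μ / Ordinal.omega0 ^ δ) % Ordinal.omega0))

/-- `λ_{g;ν}`: writing `λ_g = ω^{β₁}n₁ + ⋯ + ω^{β_k}n_k` in Cantor normal form,
this is `n_i` if `ν = ω^{β_i+1}`, and `0` for every other ordinal `ν`. -/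
noncomputable def lambdaCoeff (α : Ordinal.{0}) (g : LSeries α) (ν : Ordinal.{0}) : ℕ :=
  if h : ∃ δ : Ordinal.{0}, ν = Ordinal.omega0 ^ (δ + 1) then
    cnfCoeff (lambdaOf α g) h.choose
  else 0

/-- A composition on `𝕃_{<α}` (axioms (CL1)–(CL5)); `C f g` is `f ∘ g`,
subject to conditions only when the right argument is `> ℝ`. -/
def IsCompositionOp (α : Ordinal.{0}) (C : LSeries α → LSeries α → LSeries α) : Prop :=
  -- (CL1): for each g > ℝ, `f ↦ f ∘ g` is an ℝ-algebra homomorphism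
  (∀ g, gtR g →
    C 1 g = 1 ∧
    (∀ f₁ f₂, C (f₁ + f₂) g = C f₁ g + C f₂ g) ∧
    (∀ f₁ f₂, C (f₁ * f₂) g = C f₁ g * C f₂ g) ∧
    (∀ c : ℝ, C (HahnSeries.C c) g = HahnSeries.C c)) ∧
  -- (CL2)
  (∀ f, C f (ell α 0) = f) ∧
  (∀ g, gtR g → C (ell α 0) g = g) ∧
  -- (CL3)
  (∀ f g, gtR g → SPos f → C (logFn α f) g = logFn α (C f g)) ∧
  -- (CL4)
  (∀ g, gtR g → ∀ {ι : Type 1} (F : ι → LSeries α), IsSummable F →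
    IsSummable (fun i => C (F i) g) ∧ C (famSum F) g = famSum fun i => C (F i) g) ∧
  -- (CL5)
  (∀ f g h, gtR g → gtR h → C (C f g) h = C f (C g h))

/-- A composition admits Taylor expansion if for `g > ℝ` and `h ≺ g` the family
`(f⁽ⁿ⁾∘g)·hⁿ/n!` is summable with sum `f∘(g+h)`. -/
def AdmitsTaylor (α : Ordinal.{0}) (D : LSeries α → LSeries α)
    (C : LSeries α → LSeries α → LSeries α) : Prop :=
  ∀ f g h, gtR g → prec h g →
    IsSummable (fun n : ℕ => ((n.factorial : ℝ))⁻¹ • (C (D^[n] f) g * h ^ n)) ∧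
    C f (g + h) = famSum fun n : ℕ => ((n.factorial : ℝ))⁻¹ • (C (D^[n] f) g * h ^ n)

/-- The hyperlogarithm identities for a composition on `𝕃_{<ω^λ}`. -/
def HyperlogIds (lam : Ordinal.{0})
    (C : LSeries (Ordinal.omega0 ^ lam) → LSeries (Ordinal.omega0 ^ lam) →
      LSeries (Ordinal.omega0 ^ lam)) : Prop :=
  (∀ β γ : Ordinal.{0}, β < lam → γ < Ordinal.omega0 ^ (β + 1) →
      C (ell (Ordinal.omega0 ^ lam) γ) (ell (Ordinal.omega0 ^ lam) (Ordinal.omega0 ^ β))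
        = ell (Ordinal.omega0 ^ lam) (Ordinal.omega0 ^ β + γ)) ∧
  (∀ β : Ordinal.{0}, β < lam →
      C (ell (Ordinal.omega0 ^ lam) (Ordinal.omega0 ^ (β + 1)))
          (ell (Ordinal.omega0 ^ lam) (Ordinal.omega0 ^ β))
        = ell (Ordinal.omega0 ^ lam) (Ordinal.omega0 ^ (β + 1)) - 1) ∧
  (∀ β γ : Ordinal.{0}, β < γ → γ < lam → Order.IsSuccLimit γ →
      (C (ell (Ordinal.omega0 ^ lam) (Ordinal.omega0 ^ γ))
          (ell (Ordinal.omega0 ^ lam) (Ordinal.omega0 ^ β))).coeff 0 = 0)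


/-- `ℓ_β† := ∏_{ρ≤β} ℓ_ρ⁻¹`, and `m† := ∑_{β<α} r_β ℓ_β†` for `m = ℓ^r`. -/
noncomputable def mdag (α : Ordinal.{0}) (r : Idx α → ℝ) : LSeries α :=
  famSum fun β : Idx α => r β • monS α (dagExp α β.1)

/-- `m' := m·m†` for `m = ℓ^r`. -/
noncomputable def mder (α : Ordinal.{0}) (r : Idx α → ℝ) : LSeries α :=
  monS α r * mdag α r

/-!
The monomials `ℓ_β†` strictly decrease with `β`, so `m†` is the series with coefficient `r_β`
at `ℓ_β†` and `m' = ∑_β r_β ℓ_β† m`; (i), (ii), (iii) and (vi) are then read off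
coefficientwise. The comparisons rest on one computation with exponent sequences: if `ℓ^d ≺ 1`
and `κ` is the least index with `d_κ ≠ 0`, then `ℓ_β† ℓ^d ≺ ℓ_ν†` for all `β ≥ κ` and all `ν`,
since the exponents first differ at `κ`, or at `ν + 1` when `ν < κ`. This gives (iv) with
`d = r`. For (v), compare each term `ℓ_β† m` of `m'` with the dominant term `ℓ_ν† n` of `n'`
(`ν` the least index with `s_ν ≠ 0`), that is, `ℓ_β† (m/n)` with `ℓ_ν†`: for `β < ν` this is the computation with `d = r - s`, and
for `β ≥ ν` it follows from `ℓ_β† ⪯ ℓ_ν†` and `m/n ≺ 1`.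
-/

section WellBasedFamilies

variable {M : Type u} {ι : Type w}

theorem WellBased.mono [Preorder M] {S T : Set M} (hT : WellBased T) (hST : S ⊆ T) :
    WellBased S :=
  fun ⟨f, hf, hmem⟩ => hT ⟨f, hf, fun n => hST (hmem n)⟩

theorem wellBased_range_of_strictAnti [LinearOrder ι] [WellFoundedLT ι] [Preorder M]
    {e : ι → M} (he : StrictAnti e) : WellBased (Set.range e) := by
  rintro ⟨f, hf, hmem⟩
  choose i hi using hmem
  have hdesc : ∀ n, i (n + 1) < i n := fun n =>
    he.lt_iff_gt.mp (by rw [hi, hi]; exact hf n.lt_succ_self)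
  exact (RelEmbedding.natGT i hdesc).not_wellFounded wellFounded_lt

theorem exists_ne_zero_forall_lt_eq_zero [LinearOrder ι] [WellFoundedLT ι] [Zero M]
    {s : ι → M} (hs : s ≠ 0) : ∃ ν, s ν ≠ 0 ∧ ∀ j < ν, s j = 0 := by
  obtain ⟨ν, hν, hmin⟩ :=
    wellFounded_lt.has_min (Function.support s) (Function.support_nonempty_iff.mpr hs)
  exact ⟨ν, hν, fun j hj => by_contra fun h => hmin j h hj⟩

variable [LinearOrder M] {R : Type v} [AddCommMonoid R]
  {f : ι → HahnSeries Mᵒᵈ R} {e : ι → M}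

theorem isSummable_of_support_subset_singleton (he : e.Injective)
    (hwb : WellBased (Set.range e)) (hf : ∀ i, (f i).support ⊆ {OrderDual.toDual (e i)}) :
    IsSummable f := by
  refine ⟨hwb.mono ?_, fun g => Set.Subsingleton.finite ?_⟩
  · intro m hm
    obtain ⟨i, hi⟩ := Set.mem_iUnion.mp hm
    exact ⟨i, (hf i hi).symm⟩
  · intro i hi j hj
    exact he ((hf i hi).symm.trans (hf j hj))

theorem famSum_coeff (hs : IsSummable f) (g : Mᵒᵈ) :
    (famSum f).coeff g = ∑ᶠ i, (f i).coeff g := by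
  rw [famSum, dif_pos hs, HahnSeries.SummableFamily.coeff_hsum]
  rfl

theorem famSum_coeff_toDual (hs : IsSummable f) (he : e.Injective)
    (hf : ∀ i, (f i).support ⊆ {OrderDual.toDual (e i)}) (i : ι) :
    (famSum f).coeff (OrderDual.toDual (e i)) = (f i).coeff (OrderDual.toDual (e i)) := by
  rw [famSum_coeff hs]
  refine finsum_eq_single _ i fun j hj => ?_
  by_contra h
  exact hj (he (hf j h)).symm

theorem famSum_coeff_eq_zero (hs : IsSummable f)
    (hf : ∀ i, (f i).support ⊆ {OrderDual.toDual (e i)}) {g : Mᵒᵈ}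
    (hg : ∀ i, OrderDual.toDual (e i) ≠ g) : (famSum f).coeff g = 0 := by
  rw [famSum_coeff hs]
  refine finsum_eq_zero_of_forall_eq_zero fun i => ?_
  by_contra h
  exact hg i (hf i h).symm

end WellBasedFamilies

section Hyperseries

variable {α : Ordinal.{0}}

theorem toLex_dagExp_strictAnti : StrictAnti fun β : Idx α => toLex (dagExp α β.1) := by
  intro β γ h
  have hsucc : β.1 + 1 ≤ γ.1 := Order.add_one_le_of_lt h
  refine ⟨⟨β.1 + 1, hsucc.trans_lt γ.2⟩, fun j hj => ?_, ?_⟩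
  · have hjβ : j.1 ≤ β.1 := Order.le_of_lt_add_one hj
    simp [dagExp, hjβ, hjβ.trans h.le]
  · simp [dagExp, hsucc]

theorem monExp_add (r s : Idx α → ℝ) : monExp α (r + s) = monExp α r + monExp α s := rfl

theorem monS_mul (r s : Idx α → ℝ) : monS α r * monS α s = monS α (r + s) := by
  rw [monS, monS, monS, HahnSeries.single_mul_single, one_mul, monExp_add]

theorem support_smul_monS_subset (c : ℝ) (r : Idx α → ℝ) :
    (c • monS α r).support ⊆ {monExp α r} :=
  (Function.support_smul_subset_right _ _).trans HahnSeries.support_single_subset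

theorem isSummable_mdag_family (r : Idx α → ℝ) :
    IsSummable fun β : Idx α => r β • monS α (dagExp α β.1) :=
  isSummable_of_support_subset_singleton toLex_dagExp_strictAnti.injective
    (wellBased_range_of_strictAnti toLex_dagExp_strictAnti)
    fun _ => support_smul_monS_subset _ _

theorem mdag_coeff_monExp_dagExp (r : Idx α → ℝ) (β : Idx α) :
    (mdag α r).coeff (monExp α (dagExp α β.1)) = r β := by
  refine (famSum_coeff_toDual (isSummable_mdag_family r) toLex_dagExp_strictAnti.injective
    (fun _ => support_smul_monS_subset _ _) β).trans ?_
  simp [monS, monExp]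

theorem mdag_coeff_eq_zero (r : Idx α → ℝ) {g : (Mon α)ᵒᵈ}
    (hg : ∀ β : Idx α, monExp α (dagExp α β.1) ≠ g) : (mdag α r).coeff g = 0 :=
  famSum_coeff_eq_zero (isSummable_mdag_family r) (fun _ => support_smul_monS_subset _ _) hg

theorem mdag_add (r s : Idx α → ℝ) : mdag α (r + s) = mdag α r + mdag α s := by
  ext g
  by_cases hg : ∃ β : Idx α, monExp α (dagExp α β.1) = g
  · obtain ⟨β, rfl⟩ := hg
    simp [mdag_coeff_monExp_dagExp]
  · push Not at hg
    simp [mdag_coeff_eq_zero _ hg]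

theorem mdag_smul (t : ℝ) (r : Idx α → ℝ) : mdag α (t • r) = t • mdag α r := by
  ext g
  by_cases hg : ∃ β : Idx α, monExp α (dagExp α β.1) = g
  · obtain ⟨β, rfl⟩ := hg
    simp [mdag_coeff_monExp_dagExp]
  · push Not at hg
    simp [mdag_coeff_eq_zero _ hg]

theorem mem_support_mdag {r : Idx α → ℝ} {g : (Mon α)ᵒᵈ} :
    g ∈ (mdag α r).support ↔ ∃ β : Idx α, r β ≠ 0 ∧ monExp α (dagExp α β.1) = g := by
  constructor
  · intro hg
    by_cases h : ∃ β : Idx α, monExp α (dagExp α β.1) = g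
    · obtain ⟨β, rfl⟩ := h
      exact ⟨β, by rwa [HahnSeries.mem_support, mdag_coeff_monExp_dagExp] at hg, rfl⟩
    · push Not at h
      exact absurd (mdag_coeff_eq_zero r h) hg
  · rintro ⟨β, hβ, rfl⟩
    rwa [HahnSeries.mem_support, mdag_coeff_monExp_dagExp]

theorem mder_add (r s : Idx α → ℝ) :
    mder α (r + s) = mder α r * monS α s + monS α r * mder α s := by
  rw [mder, mder, mder, mdag_add, ← monS_mul]
  ring

theorem mem_support_mder {r : Idx α → ℝ} {g : (Mon α)ᵒᵈ} :
    g ∈ (mder α r).support ↔ ∃ β : Idx α, r β ≠ 0 ∧ monExp α (dagExp α β.1 + r) = g := by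
  rw [HahnSeries.mem_support, mder, monS, HahnSeries.coeff_single_mul, one_mul,
    ← HahnSeries.mem_support, mem_support_mdag]
  simp only [monExp_add, eq_sub_iff_add_eq]

theorem mdag_ne_zero {r : Idx α → ℝ} (hr : r ≠ 0) : mdag α r ≠ 0 := by
  obtain ⟨β, hβ⟩ := Function.ne_iff.mp hr
  exact HahnSeries.support_nonempty_iff.mp ⟨_, mem_support_mdag.mpr ⟨β, hβ, rfl⟩⟩

theorem mder_ne_zero {r : Idx α → ℝ} (hr : r ≠ 0) : mder α r ≠ 0 :=
  mul_ne_zero (HahnSeries.single_ne_zero one_ne_zero) (mdag_ne_zero hr)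

theorem toLex_lt_of_prec_monS {r s : Idx α → ℝ} (h : prec (monS α r) (monS α s)) :
    toLex r < toLex s := by
  obtain ⟨n, hn, hlt⟩ := h.2 (monExp α r) (by simp [monS, monExp])
  rwa [HahnSeries.support_single_subset hn] at hlt

theorem toLex_dagExp_add_lt {d : Idx α → ℝ} {κ β : Idx α} (hd : ∀ j < κ, d j = 0)
    (hκ : d κ < 0) (hκβ : κ ≤ β) (ν : Idx α) :
    toLex (dagExp α β.1) + toLex d < toLex (dagExp α ν.1) := by
  rw [← toLex_add]
  rcases le_or_gt κ ν with hκν | hνκ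
  · refine ⟨κ, fun j hj => ?_, ?_⟩
    · simp [dagExp, hd j hj, (hj.trans_le hκβ).le, (hj.trans_le hκν).le]
    · simp [dagExp, show κ.1 ≤ β.1 from hκβ, show κ.1 ≤ ν.1 from hκν, hκ]
  · have hsucc : ν.1 + 1 ≤ κ.1 := Order.add_one_le_of_lt hνκ
    set σ : Idx α := ⟨ν.1 + 1, hsucc.trans_lt κ.2⟩
    have hdσ : d σ ≤ 0 := by
      rcases (show σ ≤ κ from hsucc).lt_or_eq with h | h
      · exact (hd σ h).le
      · exact h ▸ hκ.le
    refine ⟨σ, fun j hj => ?_, ?_⟩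
    · have hjν : j.1 ≤ ν.1 := Order.le_of_lt_add_one hj
      simp [dagExp, hd j (hjν.trans_lt hνκ), hjν, hjν.trans (hνκ.le.trans hκβ)]
    · simp [σ, dagExp, hsucc.trans hκβ]
      linarith

theorem mder_prec_mdag {r s : Idx α → ℝ} (hr : toLex r < 0) (hs : s ≠ 0) :
    prec (mder α r) (mdag α s) := by
  obtain ⟨μ, hμ0, hμ⟩ := hr
  obtain ⟨ν, hν⟩ := Function.ne_iff.mp hs
  refine ⟨mdag_ne_zero hs, fun m hm => ?_⟩
  obtain ⟨β, hβ, rfl⟩ := mem_support_mder.mp hm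
  have hμβ : μ ≤ β := le_of_not_gt fun h => hβ (hμ0 β h)
  exact ⟨_, mem_support_mdag.mpr ⟨ν, hν, rfl⟩, toLex_dagExp_add_lt hμ0 hμ hμβ ν⟩

theorem mder_prec_mder {r s : Idx α → ℝ} (hrs : toLex r < toLex s) (hs : s ≠ 0) :
    prec (mder α r) (mder α s) := by
  obtain ⟨ν, hν, hν0⟩ := exists_ne_zero_forall_lt_eq_zero hs
  have hd : toLex (r - s) < 0 := sub_neg.mpr hrs
  obtain ⟨κ, hκ0, hκ⟩ := id hd
  refine ⟨mder_ne_zero hs, fun m hm => ?_⟩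
  obtain ⟨β, hβ, rfl⟩ := mem_support_mder.mp hm
  refine ⟨_, mem_support_mder.mpr ⟨ν, hν, rfl⟩, ?_⟩
  show toLex (dagExp α β.1 + r) < toLex (dagExp α ν.1 + s)
  suffices key : toLex (dagExp α β.1) + toLex (r - s) < toLex (dagExp α ν.1) by
    have := add_lt_add_left key (toLex s)
    rwa [add_assoc, ← toLex_add, sub_add_cancel, ← toLex_add, ← toLex_add] at this
  rcases lt_or_ge β ν with hβν | hνβ
  · have hκβ : κ ≤ β := le_of_not_gt fun h => hβ <| by
      have hdβ : (r - s) β = 0 := hκ0 β h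
      simpa [hν0 β hβν] using hdβ
    exact toLex_dagExp_add_lt hκ0 hκ hκβ ν
  · calc toLex (dagExp α β.1) + toLex (r - s) ≤ toLex (dagExp α ν.1) + toLex (r - s) :=
          add_le_add_left (toLex_dagExp_strictAnti.antitone hνβ) _
      _ < toLex (dagExp α ν.1) := add_lt_of_neg_right _ hd

/-- Basic properties of `m ↦ m†` and `m ↦ m'` on monomials `m = ℓ^r`:
the defining family is summable; (i) `(mn)† = m† + n†`, `(mᵗ)† = t·m†`;
(ii) `(mn)' = m'·n + m·n'`; (iii) `m ≠ 1 → m' ≠ 0 ∧ m† ≠ 0`;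
(iv) `m ≺ 1, n ≠ 1 → m' ≺ n†`; (v) `m ≺ n, n ≠ 1 → m' ≺ n'`;
(vi) `supp m' ⊆ {ℓ_β† : β < α}·m`. -/
theorem statement8 (α : Ordinal.{0}) :
    (∀ r : Idx α → ℝ, IsSummable fun β : Idx α => r β • monS α (dagExp α β.1)) ∧
    (∀ r s : Idx α → ℝ, mdag α (r + s) = mdag α r + mdag α s) ∧
    (∀ (t : ℝ) (r : Idx α → ℝ), mdag α (t • r) = t • mdag α r) ∧
    (∀ r s : Idx α → ℝ, mder α (r + s) = mder α r * monS α s + monS α r * mder α s) ∧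
    (∀ r : Idx α → ℝ, r ≠ 0 → mder α r ≠ 0 ∧ mdag α r ≠ 0) ∧
    (∀ r s : Idx α → ℝ, prec (monS α r) 1 → s ≠ 0 → prec (mder α r) (mdag α s)) ∧
    (∀ r s : Idx α → ℝ, prec (monS α r) (monS α s) → s ≠ 0 →
      prec (mder α r) (mder α s)) ∧
    (∀ r : Idx α → ℝ, (mder α r).support ⊆
      Set.range fun β : Idx α => monExp α (dagExp α β.1 + r)) := by
  refine ⟨isSummable_mdag_family, mdag_add, mdag_smul, mder_add,
    fun r hr => ⟨mder_ne_zero hr, mdag_ne_zero hr⟩,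
    fun r s h hs => mder_prec_mdag (toLex_lt_of_prec_monS (s := 0) h) hs,
    fun r s h hs => mder_prec_mder (toLex_lt_of_prec_monS h) hs, fun r g hg => ?_⟩
  obtain ⟨β, -, rfl⟩ := mem_support_mder.mp hg
  exact ⟨β, rfl⟩

end Hyperseries

end LogHyp
end
end

section
/- Let k be a field of characteristic 0, 𝔐 a monomial group, and (ε_i)_{i∈I} a family in k[[𝔐]]^{≺1}. Then (ε_i)_{i∈I} is summable if and only if (log(1+ε_i))_{i∈I} is summable. -/
noncomputable section

open Classical

open scoped Pointwise

namespace AddSubmonoid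

theorem mem_add_closure_of_mem_closure {Γ : Type*} [AddMonoid Γ] {S : Set Γ} {g : Γ}
    (hg : g ∈ closure S) (hg0 : g ≠ 0) : g ∈ S + (closure S : Set Γ) := by
  induction hg using closure_induction_left with
  | zero => exact absurd rfl hg0
  | add_left a ha b hb _ => exact Set.add_mem_add ha hb

theorem add_closure_subset_closure {Γ : Type*} [AddMonoid Γ] {S : Set Γ} :
    S + (closure S : Set Γ) ⊆ closure S := by
  rintro _ ⟨a, ha, b, hb, rfl⟩
  exact add_mem (subset_closure ha) hb

variable {Γ : Type*} [AddCommMonoid Γ] [PartialOrder Γ] [IsOrderedCancelAddMonoid Γ] {S T : Set Γ}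

theorem nonneg_of_mem_closure (hS : ∀ a ∈ S, 0 ≤ a) {b : Γ} (hb : b ∈ closure S) : 0 ≤ b :=
  closure_induction hS le_rfl (fun _ _ _ _ => add_nonneg) hb

theorem pos_of_mem_add_closure (hS : ∀ a ∈ S, 0 < a) {g : Γ}
    (hg : g ∈ S + (closure S : Set Γ)) : 0 < g := by
  obtain ⟨a, ha, b, hb, rfl⟩ := hg
  exact add_pos_of_pos_of_nonneg (hS a ha) (nonneg_of_mem_closure (fun c hc => (hS c hc).le) hb)

theorem closure_le_closure_of_subset_union_add (hS : S.IsPWO) (hpos : ∀ a ∈ S, 0 < a)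
    (hST : S ⊆ T ∪ (S + (S + closure S))) : closure S ≤ closure T := by
  have hWF : (closure S : Set Γ).IsWF :=
    (hS.addSubmonoid_closure fun a ha => (hpos a ha).le).isWF
  refine fun g hg => hWF.induction hg fun g _ ih => ?_
  have of_add : ∀ p ∈ closure S, ∀ q ∈ closure S, 0 < p → 0 < q → p + q = g →
      g ∈ closure T := by
    rintro p hp q hq hp0 hq0 rfl
    exact add_mem (ih p hp (lt_add_of_pos_right p hq0)) (ih q hq (lt_add_of_pos_left q hp0))
  rcases eq_or_ne g 0 with rfl | hg0
  · exact zero_mem _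
  obtain ⟨a, ha, b, hb, hab⟩ := Set.mem_add.mp (mem_add_closure_of_mem_closure ‹_› hg0)
  rcases eq_or_ne b 0 with rfl | hb0
  · rw [add_zero] at hab
    subst hab
    rcases hST ha with haT | ⟨a', ha', c, hc, hac⟩
    · exact subset_closure haT
    · exact of_add a' (subset_closure ha') c (add_closure_subset_closure hc) (hpos a' ha')
        (pos_of_mem_add_closure hpos hc) hac
  · exact of_add a (subset_closure ha) b hb (hpos a ha)
      ((nonneg_of_mem_closure (fun c hc => (hpos c hc).le) hb).lt_of_ne' hb0) hab

variable {ι : Type*} {S : ι → Set Γ}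

theorem isPWO_iUnion_add_closure (hS : (⋃ i, S i).IsPWO) (hnonneg : ∀ i, ∀ a ∈ S i, 0 ≤ a) :
    (⋃ i, S i + (closure (S i) : Set Γ)).IsPWO := by
  refine (hS.add (hS.addSubmonoid_closure ?_)).mono
    (Set.iUnion_subset fun i => Set.add_subset_add (Set.subset_iUnion S i)
      (closure_mono (Set.subset_iUnion S i)))
  simpa only [Set.mem_iUnion, forall_exists_index] using fun a i ha => hnonneg i a ha

theorem finite_setOf_mem_add_closure (hS : (⋃ i, S i).IsPWO)
    (hnonneg : ∀ i, ∀ a ∈ S i, 0 ≤ a) (hfin : ∀ g, {i | g ∈ S i}.Finite) (g : Γ) :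
    {i | g ∈ S i + (closure (S i) : Set Γ)}.Finite := by
  have hC : (closure (⋃ i, S i) : Set Γ).IsPWO := hS.addSubmonoid_closure <| by
    simpa only [Set.mem_iUnion, forall_exists_index] using fun a i ha => hnonneg i a ha
  refine ((Set.AddAntidiagonal.finite_of_isPWO hS hC g).biUnion
    fun p _ => hfin p.1).subset ?_
  rintro i ⟨a, ha, b, hb, rfl⟩
  exact Set.mem_biUnion (x := (a, b))
    ⟨Set.mem_iUnion.mpr ⟨i, ha⟩, closure_mono (Set.subset_iUnion S i) hb, rfl⟩ ha

end AddSubmonoid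

theorem HahnSeries.support_pow_succ_subset {Γ R : Type*} [AddCommMonoid Γ] [PartialOrder Γ]
    [IsOrderedCancelAddMonoid Γ] [Semiring R] (x : HahnSeries Γ R) (n : ℕ) :
    (x ^ (n + 1)).support ⊆ x.support + (AddSubmonoid.closure x.support : Set Γ) := by
  rw [pow_succ']
  exact support_mul_subset.trans
    (Set.add_subset_add_left (SummableFamily.support_pow_subset_closure x n))

namespace LogHyp

theorem support_pos_of_prec_one {M R : Type*} [AddCommGroup M] [LinearOrder M]
    [IsOrderedAddMonoid M] [Zero R] [One R] {f : HahnSeries Mᵒᵈ R} (hf : prec f 1) :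
    ∀ a ∈ f.support, 0 < a := by
  intro a ha
  obtain ⟨n, hn, han⟩ := hf.2 a ha
  rw [← HahnSeries.single_zero_one] at hn
  rwa [HahnSeries.support_single_subset hn] at han

section IsSummable

variable {M : Type*} [LinearOrder M] {R : Type*} {ι ι' : Type*}

theorem wellBased_of_isPWO {S : Set Mᵒᵈ} (h : S.IsPWO) : WellBased (OrderDual.toDual ⁻¹' S) := by
  rw [Set.isPWO_iff_isWF] at h
  rintro ⟨f, hf, hmem⟩
  exact Set.isWF_iff_no_descending_seq.mp h (fun n => OrderDual.toDual (f n))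
    (fun a b hab => hf hab) hmem

theorem isSummable_iff [Zero R] {f : ι → HahnSeries Mᵒᵈ R} :
    IsSummable f ↔ (⋃ i, (f i).support).IsPWO ∧ ∀ g, {i | g ∈ (f i).support}.Finite :=
  ⟨fun h => ⟨wellBased_isPWO h.1, h.2⟩, fun h => ⟨wellBased_of_isPWO h.1, h.2⟩⟩

theorem IsSummable.of_support_subset [Zero R] {F : ι → HahnSeries Mᵒᵈ R}
    {G : ι' → HahnSeries Mᵒᵈ R} (hF : IsSummable F) {e : ι' → ι} (he : e.Injective)
    (hGF : ∀ j, (G j).support ⊆ (F (e j)).support) : IsSummable G := by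
  rw [isSummable_iff] at hF ⊢
  exact ⟨hF.1.mono (Set.iUnion_subset fun j =>
      (hGF j).trans (Set.subset_iUnion (fun i => (F i).support) (e j))),
    fun g => ((hF.2 g).preimage he.injOn).subset fun j hj => hGF j hj⟩

theorem isSummable_coe [AddCommMonoid R] (s : HahnSeries.SummableFamily Mᵒᵈ R ι) :
    IsSummable ⇑s :=
  isSummable_iff.mpr ⟨s.isPWO_iUnion_support, s.finite_co_support⟩

theorem support_famSum_subset [AddCommMonoid R] {f : ι → HahnSeries Mᵒᵈ R} (h : IsSummable f) :
    (famSum f).support ⊆ ⋃ i, (f i).support := by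
  rw [famSum, dif_pos h]
  exact HahnSeries.SummableFamily.support_hsum_subset

theorem coeff_famSum [AddCommMonoid R] {f : ι → HahnSeries Mᵒᵈ R} (h : IsSummable f) (g : Mᵒᵈ) :
    (famSum f).coeff g = ∑ᶠ i, (f i).coeff g := by
  rw [famSum, dif_pos h]
  exact HahnSeries.SummableFamily.coeff_hsum

end IsSummable

theorem IsSummable.of_support_subset_add_closure {M : Type*} [AddCommGroup M] [LinearOrder M]
    [IsOrderedAddMonoid M] {R ι : Type*} [Zero R] {F G : ι → HahnSeries Mᵒᵈ R}
    (hF : IsSummable F) (hnonneg : ∀ i, ∀ a ∈ (F i).support, 0 ≤ a)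
    (hGF : ∀ i, (G i).support ⊆ (F i).support + (AddSubmonoid.closure (F i).support : Set Mᵒᵈ)) :
    IsSummable G := by
  rw [isSummable_iff] at hF ⊢
  exact ⟨(AddSubmonoid.isPWO_iUnion_add_closure hF.1 hnonneg).mono (Set.iUnion_mono hGF),
    fun g => (AddSubmonoid.finite_setOf_mem_add_closure hF.1 hnonneg hF.2 g).subset
      fun i hi => hGF i hi⟩

section Log1p

variable {M : Type*} [AddCommGroup M] [LinearOrder M] [IsOrderedAddMonoid M]
  {k : Type*} [Field k] {x : HahnSeries Mᵒᵈ k}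

theorem isSummable_smul_pow_succ (hx : ∀ a ∈ x.support, 0 < a) (c : ℕ → k) :
    IsSummable fun n => c n • x ^ (n + 1) := by
  have hx' : 0 < x.orderTop := by
    rcases eq_or_ne x 0 with rfl | hx0
    · simp
    · rw [HahnSeries.orderTop_of_ne_zero hx0, WithTop.coe_pos]
      exact hx _ (x.isWF_support.min_mem _)
  refine (isSummable_coe (HahnSeries.SummableFamily.powers x)).of_support_subset
    Nat.succ_injective fun n => ?_
  rw [HahnSeries.SummableFamily.powers_of_orderTop_pos hx']
  exact HahnSeries.support_smul_subset _ _

theorem support_log1p_subset (hx : ∀ a ∈ x.support, 0 < a) :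
    (log1p x).support ⊆ x.support + (AddSubmonoid.closure x.support : Set Mᵒᵈ) :=
  (support_famSum_subset (isSummable_smul_pow_succ hx _)).trans <| Set.iUnion_subset fun n =>
    (HahnSeries.support_smul_subset _ _).trans (x.support_pow_succ_subset n)

theorem pos_of_mem_support_log1p (hx : ∀ a ∈ x.support, 0 < a) :
    ∀ a ∈ (log1p x).support, 0 < a :=
  fun _ ha => AddSubmonoid.pos_of_mem_add_closure hx (support_log1p_subset hx ha)

/-- `log (1 + x) - x` only involves the powers `x ^ (n + 2)`. -/
theorem support_subset_support_log1p_union (hx : ∀ a ∈ x.support, 0 < a) :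
    x.support ⊆ (log1p x).support ∪
      (x.support + (x.support + (AddSubmonoid.closure x.support : Set Mᵒᵈ))) := by
  intro g hg
  by_contra h
  rw [Set.mem_union, not_or] at h
  have hhigh : ∀ n, (x ^ (n + 2)).coeff g = 0 := fun n => by
    by_contra hn
    rw [pow_succ'] at hn
    obtain ⟨a, ha, b, hb, rfl⟩ := HahnSeries.support_mul_subset hn
    exact h.2 (Set.add_mem_add ha (x.support_pow_succ_subset n hb))
  have hcoeff : (log1p x).coeff g = x.coeff g := by
    rw [log1p, coeff_famSum (isSummable_smul_pow_succ hx _), finsum_eq_single _ 0]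
    · simp
    · rintro (_ | n) hn
      · exact absurd rfl hn
      · rw [HahnSeries.coeff_smul, hhigh, smul_zero]
  exact h.1 (by rwa [HahnSeries.mem_support, hcoeff])

theorem support_subset_add_closure_support_log1p (hx : ∀ a ∈ x.support, 0 < a) :
    x.support ⊆ (log1p x).support + (AddSubmonoid.closure (log1p x).support : Set Mᵒᵈ) :=
  fun g hg => AddSubmonoid.mem_add_closure_of_mem_closure
    (AddSubmonoid.closure_le_closure_of_subset_union_add x.isPWO_support hx
      (support_subset_support_log1p_union hx) (AddSubmonoid.subset_closure hg)) (hx g hg).ne'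

end Log1p

theorem statement11_general {k : Type} [Field k] {M : Type}
    [AddCommGroup M] [LinearOrder M] [IsOrderedAddMonoid M] {ι : Type}
    (ε : ι → HahnSeries Mᵒᵈ k) (hε : ∀ i, prec (ε i) 1) :
    IsSummable ε ↔ IsSummable fun i => log1p (ε i) := by
  have hpos i : ∀ a ∈ (ε i).support, 0 < a := support_pos_of_prec_one (hε i)
  constructor
  · exact fun h => h.of_support_subset_add_closure (fun i a ha => (hpos i a ha).le)
      fun i => support_log1p_subset (hpos i)
  · exact fun h => h.of_support_subset_add_closure
      (fun i a ha => (pos_of_mem_support_log1p (hpos i) a ha).le)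
      fun i => support_subset_add_closure_support_log1p (hpos i)

/-- For a family `(ε_i)` in `k[[𝔐]]^{≺1}` (`k` of characteristic 0):
`(ε_i)` is summable iff `(log(1+ε_i))` is summable. -/
theorem statement11 {k : Type} [Field k] [CharZero k] {M : Type}
    [AddCommGroup M] [LinearOrder M] [IsOrderedAddMonoid M] {ι : Type}
    (ε : ι → HahnSeries Mᵒᵈ k) (hε : ∀ i, prec (ε i) 1) :
    IsSummable ε ↔ IsSummable fun i => log1p (ε i) :=
  statement11_general ε hε

end LogHyp
end
end
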